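/- arXiv:2209.10009 — 3 statements merged into one kernel-verified Lean document; each statement's English description precedes it below -/
import Mathlib

section
/- If the Hermitian matrix S_M is positive definite and v satisfies S_M v = Ω (M T) v with v ≠ 0, where M T is Hermitian invertible, then Ω is real and nonzero, and the sign of Ω equals the sign of the real number v† M T v. -/
open Matrix
open scoped ComplexOrder

lemma herm_quad_im_zero {n : Type*} [Fintype n] (A : Matrix n n ℂ)
    (hA : A.IsHermitian) (v : n → ℂ) : (star v ⬝ᵥ (A *ᵥ v)).im = 0 := by
  rw [← Complex.conj_eq_iff_im]
  calc (starRingEnd ℂ) (star v ⬝ᵥ (A *ᵥ v)) = star (star v ⬝ᵥ (A *ᵥ v)) := rfl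
    _ = star (A *ᵥ v) ⬝ᵥ v := by rw [star_dotProduct, star_star]
    _ = star v ⬝ᵥ (A *ᵥ v) := by rw [star_mulVec, hA.eq, ← dotProduct_mulVec]

/-- if the Hermitian matrix `S_M` is positive definite and `v ≠ 0`
satisfies `S_M v = Ω (M T) v` with `M T` Hermitian and invertible, then `Ω` is real
and nonzero, and the sign of `Ω` equals the sign of the real number `v† M T v`. -/
theorem stability_implies_real_eigenvalues {n : Type*} [Fintype n] [DecidableEq n]
    (SM M T : Matrix n n ℂ)
    (hSM : SM.PosDef)
    (hM : M.IsHermitian) (hM2 : M * M = 1)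
    (hT : T.PosDef) (hMT : M * T = T * M)
    (v : n → ℂ) (hv : v ≠ 0) (Ω : ℂ)
    (heig : SM *ᵥ v = Ω • ((M * T) *ᵥ v)) :
    Ω.im = 0 ∧ Ω.re ≠ 0 ∧
      Real.sign Ω.re = Real.sign (star v ⬝ᵥ ((M * T) *ᵥ v)).re := by
  set a : ℂ := star v ⬝ᵥ (SM *ᵥ v) with ha
  set b : ℂ := star v ⬝ᵥ ((M * T) *ᵥ v) with hb
  have hMT_herm : (M * T).IsHermitian := by
    rw [Matrix.IsHermitian, conjTranspose_mul, hT.1.eq, hM.eq, ← hMT]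
  have hbim : b.im = 0 := herm_quad_im_zero _ hMT_herm v
  have haim : a.im = 0 := herm_quad_im_zero _ hSM.1 v
  have hare : 0 < a.re := by
    have := hSM.re_dotProduct_pos hv
    simpa [ha] using this
  have hab : a = Ω * b := by
    rw [ha, hb, heig, dotProduct_smul, smul_eq_mul]
  have hre : a.re = Ω.re * b.re := by
    rw [hab]; simp [Complex.mul_re, hbim]
  have him : Ω.im * b.re = 0 := by
    have : a.im = Ω.re * b.im + Ω.im * b.re := by rw [hab]; simp [Complex.mul_im]
    rw [haim, hbim] at this
    linarith
  have hbre : b.re ≠ 0 := by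
    intro h
    rw [h, mul_zero] at hre
    exact hare.ne' hre
  have hΩim : Ω.im = 0 := by
    rcases mul_eq_zero.mp him with h | h
    · exact h
    · exact absurd h hbre
  have hΩre : Ω.re ≠ 0 := by
    intro h
    rw [h, zero_mul] at hre
    exact hare.ne' hre
  refine ⟨hΩim, hΩre, ?_⟩
  have hpos : 0 < Ω.re * b.re := hre ▸ hare
  rcases lt_trichotomy b.re 0 with h | h | h
  · have : Ω.re < 0 := by
      by_contra hc
      push_neg at hc
      nlinarith
    rw [Real.sign_of_neg this, Real.sign_of_neg h]
  · exact absurd h hbre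
  · have : 0 < Ω.re := by
      by_contra hc
      push_neg at hc
      nlinarith
    rw [Real.sign_of_pos this, Real.sign_of_pos h]
end

section
/- Suppose A = (MT)⁻¹ S_M where S_M is Hermitian positive definite and MT is Hermitian invertible. Then A is diagonalizable over ℝ: there exists a basis of ℂⁿ of eigenvectors of A, all eigenvalues of A are real, and the eigenvectors {v_k} can be normalized so that v_k† (M T) v_l = ±δ_{kl}, with the sign equal to the sign of the corresponding eigenvalue. -/
open Matrix
open scoped ComplexOrder

/-!
Write `S = Rᴴ R` with `R` invertible and put `K = R⁻ᴴ B R⁻¹`, where `B = M T`. Then `K` is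
Hermitian and invertible, so it has an orthonormal eigenbasis `u_k` with nonzero real eigenvalues
`μ_k`; rescaling `u_k` by `|μ_k|^{-1/2}` makes `u_k† K u_l = sign(μ_k) δ_{kl}`. Since
`A⁻¹ = S⁻¹ B = R⁻¹ K R`, the vectors `v_k = R⁻¹ u_k` are eigenvectors of `A` with eigenvalues
`μ_k⁻¹`, and `v_k† B v_l = u_k† K u_l`. Linear independence follows from this nondegenerate
normalization.
-/

theorem Real.sign_eq_div_abs (r : ℝ) : Real.sign r = r / |r| := by
  rcases lt_trichotomy r 0 with h | rfl | h
  · rw [Real.sign_of_neg h, abs_of_neg h, div_neg, div_self h.ne]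
  · simp [Real.sign_zero]
  · rw [Real.sign_of_pos h, abs_of_pos h, div_self h.ne']

theorem linearIndependent_of_dotProduct_eq_ite {R ι m : Type*} [CommRing R] [NoZeroDivisors R]
    [Fintype m] [DecidableEq ι] {u v : ι → m → R} {s : ι → R} (hs : ∀ k, s k ≠ 0)
    (huv : ∀ k l, u k ⬝ᵥ v l = if k = l then s k else 0) : LinearIndependent R v := by
  rw [linearIndependent_iff']
  intro t g hg l hl
  have h := congrArg (u l ⬝ᵥ ·) hg
  simp only [dotProduct_sum, dotProduct_smul, huv, smul_eq_mul, mul_ite, mul_zero,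
    Finset.sum_ite_eq, if_pos hl, dotProduct_zero] at h
  exact (mul_eq_zero.mp h).resolve_right (hs l)

theorem Orthonormal.star_dotProduct_eq_ite {𝕜 ι n : Type*} [RCLike 𝕜] [Fintype n]
    [DecidableEq ι] {v : ι → EuclideanSpace 𝕜 n} (hv : Orthonormal 𝕜 v) (k l : ι) :
    star (v k).ofLp ⬝ᵥ (v l).ofLp = if k = l then 1 else 0 := by
  rw [dotProduct_comm, ← EuclideanSpace.inner_eq_star_dotProduct, orthonormal_iff_ite.mp hv]

namespace Matrix

theorem star_mulVec_dotProduct_mulVec_mulVec {α m n : Type*} [NonUnitalSemiring α] [StarRing α]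
    [Fintype m] [Fintype n] (P : Matrix m n α) (B : Matrix m m α) (x y : n → α) :
    star (P *ᵥ x) ⬝ᵥ (B *ᵥ (P *ᵥ y)) = star x ⬝ᵥ ((Pᴴ * B * P) *ᵥ y) := by
  rw [star_mulVec, ← dotProduct_mulVec, mulVec_mulVec, mulVec_mulVec, Matrix.mul_assoc]

variable {𝕜 n : Type*} [RCLike 𝕜] [Fintype n] [DecidableEq n]

theorem IsHermitian.eigenvalues_ne_zero {A : Matrix n n 𝕜} (hA : A.IsHermitian) (hAu : IsUnit A)
    (i : n) : hA.eigenvalues i ≠ 0 := by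
  have hdet := ((isUnit_iff_isUnit_det A).mp hAu).ne_zero
  rw [hA.det_eq_prod_eigenvalues, Finset.prod_ne_zero_iff] at hdet
  exact_mod_cast hdet i (Finset.mem_univ i)

theorem IsHermitian.exists_eigenvectors_star_dotProduct_mulVec_eq_sign {K : Matrix n n 𝕜}
    (hK : K.IsHermitian) (hKu : IsUnit K) :
    ∃ (x : n → n → 𝕜) (μ : n → ℝ), (∀ k, μ k ≠ 0) ∧ (∀ k, K *ᵥ x k = (μ k : 𝕜) • x k) ∧
      ∀ k l, star (x k) ⬝ᵥ (K *ᵥ x l) = if k = l then (Real.sign (μ k) : 𝕜) else 0 := by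
  set μ := hK.eigenvalues
  set u : n → n → 𝕜 := fun k => (hK.eigenvectorBasis k).ofLp
  set c : n → ℝ := fun k => (√|μ k|)⁻¹
  have hK_eig (k : n) : K *ᵥ u k = (μ k : 𝕜) • u k := by
    rw [hK.mulVec_eigenvectorBasis, RCLike.real_smul_eq_coe_smul (K := 𝕜)]
  have hc_sq (k : n) : c k * c k * μ k = Real.sign (μ k) := by
    rw [← mul_inv, Real.mul_self_sqrt (abs_nonneg _), Real.sign_eq_div_abs, inv_mul_eq_div]
  have horth : ∀ k l, star (u k) ⬝ᵥ u l = if k = l then 1 else 0 :=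
    hK.eigenvectorBasis.orthonormal.star_dotProduct_eq_ite
  refine ⟨fun k => (c k : 𝕜) • u k, μ, hK.eigenvalues_ne_zero hKu, fun k => ?_, fun k l => ?_⟩
  · rw [mulVec_smul, hK_eig, smul_comm (c k : 𝕜)]
  · simp only [star_smul, mulVec_smul, hK_eig, smul_dotProduct, dotProduct_smul,
      horth, RCLike.star_def, RCLike.conj_ofReal, smul_eq_mul]
    split_ifs with hkl
    · subst hkl
      rw [mul_one, ← hc_sq k]
      push_cast
      ring
    · simp

theorem IsHermitian.exists_eigenvectors_inv_mul_of_posDef {B S : Matrix n n 𝕜} (hB : B.IsHermitian)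
    (hBu : IsUnit B) (hS : S.PosDef) :
    ∃ (v : n → n → 𝕜) (Ω : n → ℝ), LinearIndependent 𝕜 v ∧ (∀ k, Ω k ≠ 0) ∧
      (∀ k, (B⁻¹ * S) *ᵥ v k = (Ω k : 𝕜) • v k) ∧
      ∀ k l, star (v k) ⬝ᵥ (B *ᵥ v l) = if k = l then (Real.sign (Ω k) : 𝕜) else 0 := by
  obtain ⟨R, hRu, rfl⟩ : ∃ R : Matrix n n 𝕜, IsUnit R ∧ S = Rᴴ * R := by
    open scoped MatrixOrder in
    exact CStarAlgebra.isStrictlyPositive_iff_eq_star_mul_self.mp hS.isStrictlyPositive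
  have hRdet : IsUnit R.det := (isUnit_iff_isUnit_det R).mp hRu
  have hRinv : IsUnit R⁻¹ := isUnit_nonsing_inv_iff.mpr hRu
  set K := (R⁻¹)ᴴ * B * R⁻¹
  have hK : K.IsHermitian := isHermitian_conjTranspose_mul_mul _ hB
  have hKu : IsUnit K := (((isUnit_conjTranspose _).mpr hRinv).mul hBu).mul hRinv
  have hAK : B⁻¹ * (Rᴴ * R) * R⁻¹ * K = R⁻¹ := by
    calc B⁻¹ * (Rᴴ * R) * R⁻¹ * K = B⁻¹ * (Rᴴ * (R * R⁻¹) * (R⁻¹)ᴴ) * B * R⁻¹ := by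
          simp only [K, Matrix.mul_assoc]
      _ = R⁻¹ := by
          rw [mul_nonsing_inv _ hRdet, Matrix.mul_one, ← conjTranspose_mul,
            nonsing_inv_mul _ hRdet, conjTranspose_one, Matrix.mul_one,
            nonsing_inv_mul _ ((isUnit_iff_isUnit_det B).mp hBu), Matrix.one_mul]
  obtain ⟨x, μ, hμ, hKx, hxKx⟩ := hK.exists_eigenvectors_star_dotProduct_mulVec_eq_sign hKu
  have hnorm (k l : n) : star (R⁻¹ *ᵥ x k) ⬝ᵥ (B *ᵥ (R⁻¹ *ᵥ x l)) =
      if k = l then (Real.sign (μ k)⁻¹ : 𝕜) else 0 := by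
    rw [star_mulVec_dotProduct_mulVec_mulVec, hxKx, Real.sign_inv]
  refine ⟨fun k => R⁻¹ *ᵥ x k, fun k => (μ k)⁻¹, ?_, fun k => inv_ne_zero (hμ k), fun k => ?_,
    hnorm⟩
  · refine linearIndependent_of_dotProduct_eq_ite (u := fun k => star (R⁻¹ *ᵥ x k) ᵥ* B)
      (s := fun k => (Real.sign (μ k)⁻¹ : 𝕜))
      (fun k => by simpa [Real.sign_inv, Real.sign_eq_zero_iff] using hμ k) fun k l => ?_
    rw [← dotProduct_mulVec, hnorm]
  · have hAv : (μ k : 𝕜) • ((B⁻¹ * (Rᴴ * R)) *ᵥ (R⁻¹ *ᵥ x k)) = R⁻¹ *ᵥ x k := by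
      rw [← mulVec_smul, ← mulVec_smul, ← hKx, mulVec_mulVec, mulVec_mulVec, hAK]
    rw [RCLike.ofReal_inv]
    exact (eq_inv_smul_iff₀ (by exact_mod_cast hμ k)).mpr hAv

end Matrix

/-- if `S_M` is Hermitian positive definite and `M T` is Hermitian
invertible (`M` a Hermitian involution commuting with the Hermitian positive
definite `T`), then `A = (M T)⁻¹ S_M` is diagonalizable with real eigenvalues:
there is a linearly independent family of `n` eigenvectors `v_k` (hence a basis of
`ℂⁿ`), with nonzero real eigenvalues `Ω_k`, normalized so that
`v_k† (M T) v_l = sign(Ω_k) δ_{kl}`. -/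
theorem ftqrpa_diagonalizable {n : Type*} [Fintype n] [DecidableEq n]
    (SM M T : Matrix n n ℂ)
    (hSM : SM.PosDef)
    (hM : M.IsHermitian) (hM2 : M * M = 1)
    (hT : T.PosDef) (hMT : M * T = T * M)
    (A : Matrix n n ℂ) (hA : A = (M * T)⁻¹ * SM) :
    ∃ (v : n → (n → ℂ)) (Ω : n → ℝ),
      LinearIndependent ℂ v ∧
      (∀ k, Ω k ≠ 0) ∧
      (∀ k, A *ᵥ v k = (Ω k : ℂ) • v k) ∧
      (∀ k l, star (v k) ⬝ᵥ ((M * T) *ᵥ v l) =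
        if k = l then (Real.sign (Ω k) : ℂ) else 0) := by
  subst hA
  have hMT_herm : (M * T).IsHermitian := (hM.commute_iff hT.isHermitian).mp hMT
  have hM_unit : IsUnit M := ⟨⟨M, M, hM2, hM2⟩, rfl⟩
  exact hMT_herm.exists_eigenvectors_inv_mul_of_posDef (hM_unit.mul hT.isUnit) hSM
end

section
/- Under the hypotheses that S_M is Hermitian positive definite and MT is Hermitian invertible, the normalized eigenvectors of A = (MT)⁻¹ S_M satisfy the closure relation: Σ_k σ_k v_k v_k† (M T) = I, where σ_k = sign(Ω_k) ∈ {+1, -1} and v_k† M T v_k = σ_k. -/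
open Matrix
open scoped ComplexOrder

/-- with `S_M` Hermitian positive definite and `M T` Hermitian
invertible, the eigenvectors of `A = (M T)⁻¹ S_M`, normalized so that
`v_k† (M T) v_l = σ_k δ_{kl}` with `σ_k = sign(Ω_k)`, satisfy the closure relation
`Σ_k σ_k v_k v_k† (M T) = 1`. -/
theorem ftqrpa_closure {n : Type*} [Fintype n] [DecidableEq n]
    (SM M T : Matrix n n ℂ)
    (hSM : SM.PosDef)
    (hM : M.IsHermitian) (hM2 : M * M = 1)
    (hT : T.PosDef) (hMT : M * T = T * M)
    (A : Matrix n n ℂ) (hA : A = (M * T)⁻¹ * SM)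
    (v : n → (n → ℂ)) (Ω : n → ℝ)
    (hΩ : ∀ k, Ω k ≠ 0)
    (heig : ∀ k, A *ᵥ v k = (Ω k : ℂ) • v k)
    (hnorm : ∀ k l, star (v k) ⬝ᵥ ((M * T) *ᵥ v l) =
      if k = l then (Real.sign (Ω k) : ℂ) else 0) :
    (∑ k, (Real.sign (Ω k) : ℂ) • Matrix.vecMulVec (v k) (star (v k))) * (M * T) = 1 := by
  set σ : n → ℂ := fun k => (Real.sign (Ω k) : ℂ) with hσ
  have hσ2 : ∀ k, σ k * σ k = 1 := by
    intro k
    rcases Real.sign_apply_eq_of_ne_zero _ (hΩ k) with h | h <;> simp [hσ, h]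
  have hσ0 : ∀ k, σ k ≠ 0 := fun k h => by
    have := hσ2 k; rw [h, mul_zero] at this; exact one_ne_zero this.symm
  set P : Matrix n n ℂ := Matrix.of (fun i k => v k i) with hP
  set D : Matrix n n ℂ := Matrix.diagonal σ with hD
  have key : Pᴴ * (M * T) * P = D := by
    ext k l
    have h := hnorm k l
    simp only [Matrix.mul_apply, Matrix.conjTranspose_apply, dotProduct,
      Matrix.mulVec, Matrix.of_apply, hD, Matrix.diagonal_apply, hP, Pi.star_apply] at h ⊢
    rw [← h]
    simp only [Finset.sum_mul, Finset.mul_sum]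
    rw [Finset.sum_comm]
    refine Finset.sum_congr rfl fun i _ => Finset.sum_congr rfl fun j _ => Finset.sum_congr rfl fun m _ => by ring
  have hDD : D * D = 1 := by
    rw [hD, Matrix.diagonal_mul_diagonal]
    ext i j
    rcases eq_or_ne i j with rfl | h
    · simp [hσ2]
    · simp [Matrix.diagonal_apply_ne _ h, Matrix.one_apply_ne h]
  have hdetD : D.det ≠ 0 := by
    rw [hD, Matrix.det_diagonal]
    exact Finset.prod_ne_zero_iff.mpr fun k _ => hσ0 k
  have hPdet : IsUnit P.det := by
    have hdet : Pᴴ.det * ((M * T).det * P.det) = D.det := by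
      rw [← key]; simp only [Matrix.det_mul]; ring
    refine isUnit_iff_ne_zero.mpr fun h0 => hdetD ?_
    rw [← hdet, h0, mul_zero, mul_zero]
  have hPP : P * P⁻¹ = 1 := Matrix.mul_nonsing_inv P hPdet
  have h1 : Pᴴ * (M * T) = D * P⁻¹ := by
    rw [← key, Matrix.mul_assoc (Pᴴ * (M * T)) P P⁻¹, hPP, Matrix.mul_one]
  have hsum : (∑ k, σ k • Matrix.vecMulVec (v k) (star (v k))) = P * D * Pᴴ := by
    ext i j
    simp only [Matrix.sum_apply, Matrix.smul_apply, Matrix.vecMulVec_apply, smul_eq_mul,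
      Matrix.mul_apply, hD, Matrix.diagonal_apply, Matrix.conjTranspose_apply, hP,
      Matrix.of_apply, Pi.star_apply, mul_ite, mul_zero, ite_mul, zero_mul,
      Finset.sum_ite_eq, Finset.sum_ite_eq', Finset.mem_univ, if_true]
    exact Finset.sum_congr rfl fun k _ => by ring
  rw [hsum, Matrix.mul_assoc, h1, ← Matrix.mul_assoc, Matrix.mul_assoc P D D, hDD,
    Matrix.mul_one, hPP]
end
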